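/- arXiv:1309.1963 — 9 statements merged into one kernel-verified Lean document; each statement's English description precedes it below -/
import Mathlib

section
/- Let B be a commutative monoid satisfying the splitting condition, and let s(B) = (B × {−1,1})/∼ with the hyperaddition given by (a,1)+(b,1) = {(a+b,1)}, (a,−1)+(b,−1) = {(a+b,−1)}, and (a,1)+(b,−1) = {(z,1) : z + b = a} ∪ {(z,−1) : z + a = b}. Then the hypersum of any two elements of s(B) is nonempty. -/
/-- The splitting condition on a commutative monoid. -/
def SplitCond (M : Type*) [AddCommMonoid M] : Prop :=
  ∀ x y u v : M, x + y = u + v →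
    ∃ z : M, (x + z = u ∧ z + v = y) ∨ (x = u + z ∧ v = z + y)

/-- The basic identification `(a, 1) ∼ (b, -1)` when `a + b = 0` (true = +1, false = -1). -/
def symRel (M : Type*) [AddCommMonoid M] : M × Bool → M × Bool → Prop :=
  fun p q => p.2 ≠ q.2 ∧ p.1 + q.1 = 0

/-- The symmetrization `s(M)` as the quotient of `M × {±1}` by the generated equivalence. -/
def SymHG (M : Type*) [AddCommMonoid M] := Quot (symRel M)

/-- The hyperlaw on representatives. -/
def hsum {M : Type*} [AddCommMonoid M] : M × Bool → M × Bool → Set (M × Bool)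
  | (a, true), (b, true) => {(a + b, true)}
  | (a, false), (b, false) => {(a + b, false)}
  | (a, true), (b, false) =>
      {r | (∃ z, r = (z, true) ∧ z + b = a) ∨ (∃ z, r = (z, false) ∧ z + a = b)}
  | (a, false), (b, true) =>
      {r | (∃ z, r = (z, true) ∧ z + a = b) ∨ (∃ z, r = (z, false) ∧ z + b = a)}

/-- The induced hypersum on the quotient `s(M)` (union over representatives). -/
def hadd {M : Type*} [AddCommMonoid M] (x y : SymHG M) : Set (SymHG M) :=
  {c | ∃ p q r, Quot.mk (symRel M) p = x ∧ Quot.mk (symRel M) q = y ∧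
      Quot.mk (symRel M) r = c ∧ r ∈ hsum p q}

/-- The neutral element of `s(M)`. -/
def szero (M : Type*) [AddCommMonoid M] : SymHG M := Quot.mk (symRel M) (0, true)

theorem hadd_nonempty {M : Type*} [AddCommMonoid M] (h : SplitCond M) :
    ∀ x y : SymHG M, (hadd x y).Nonempty := by
  intro x y
  induction x using Quot.ind with
  | _ p =>
  induction y using Quot.ind with
  | _ q =>
  obtain ⟨a, _ | _⟩ := p <;> obtain ⟨b, _ | _⟩ := q
  · exact ⟨_, (a, false), (b, false), (a + b, false), rfl, rfl, rfl, rfl⟩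
  · obtain ⟨z, hz | hz⟩ := h a b b a (add_comm a b)
    · exact ⟨_, (a, false), (b, true), (z, true), rfl, rfl, rfl,
        Or.inl ⟨z, rfl, hz.2⟩⟩
    · exact ⟨_, (a, false), (b, true), (z, false), rfl, rfl, rfl,
        Or.inr ⟨z, rfl, hz.2.symm⟩⟩
  · obtain ⟨z, hz | hz⟩ := h a b b a (add_comm a b)
    · exact ⟨_, (a, true), (b, false), (z, false), rfl, rfl, rfl,
        Or.inr ⟨z, rfl, hz.2⟩⟩
    · exact ⟨_, (a, true), (b, false), (z, true), rfl, rfl, rfl,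
        Or.inl ⟨z, rfl, hz.2.symm⟩⟩
  · exact ⟨_, (a, true), (b, true), (a + b, true), rfl, rfl, rfl, rfl⟩
end

section
/- Let B be a commutative monoid and suppose b has an additive inverse b' (b + b' = 0). Then for any a ∈ B, the subsets of s(B) given by (a,1) + (b,−1) and (a,1) + (b',1) (computed via the hyperlaw and taken modulo the equivalence ∼) coincide. Hence the hyperlaw is well-defined on the quotient s(B). -/
theorem hsum_well_defined {M : Type*} [AddCommMonoid M]
    (b b' : M) (hb : b + b' = 0) :
    ∀ a : M,
      Quot.mk (symRel M) '' hsum (a, true) (b, false) =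
        Quot.mk (symRel M) '' hsum (a, true) (b', true) := by
  intro a
  ext c
  simp only [hsum, Set.mem_image, Set.mem_setOf_eq, Set.mem_singleton_iff]
  constructor
  · rintro ⟨r, hr, rfl⟩
    refine ⟨(a + b', true), rfl, ?_⟩
    rcases hr with ⟨z, rfl, hz⟩ | ⟨z, rfl, hz⟩
    · have : a + b' = z := by
        calc a + b' = z + b + b' := by rw [hz]
        _ = z := by rw [add_assoc, hb, add_zero]
      rw [this]
    · exact (Quot.sound ⟨by simp, by rw [← add_assoc, hz, hb]⟩).symm
  · rintro ⟨r, rfl, rfl⟩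
    exact ⟨(a + b', true), Or.inl ⟨a + b', rfl, by rw [add_assoc, add_comm b' b, hb, add_zero]⟩, rfl⟩
end

section
/- Let B be a commutative monoid satisfying the splitting condition. Then every element of s(B) has a unique hyperadditive inverse: for each x ∈ s(B) there is a unique y ∈ s(B) with 0 ∈ x + y. -/
private def myR {M : Type*} [AddCommMonoid M] (p q : M × Bool) : Prop :=
  (p.2 = q.2 ∧ p.1 = q.1) ∨ (p.2 ≠ q.2 ∧ p.1 + q.1 = 0)

private lemma eqvGen_to_myR {M : Type*} [AddCommMonoid M] {p q : M × Bool}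
    (hpq : Relation.EqvGen (symRel M) p q) : myR p q := by
  induction hpq with
  | rel p q hr => exact Or.inr hr
  | refl p => exact Or.inl ⟨rfl, rfl⟩
  | symm p q _ ih =>
    rcases ih with ⟨e1, e2⟩ | ⟨e1, e2⟩
    · exact Or.inl ⟨e1.symm, e2.symm⟩
    · exact Or.inr ⟨fun hh => e1 hh.symm, by rw [add_comm]; exact e2⟩
  | trans p q r _ _ ih1 ih2 =>
    rcases ih1 with ⟨e1, e2⟩ | ⟨e1, e2⟩
    · rcases ih2 with ⟨f1, f2⟩ | ⟨f1, f2⟩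
      · exact Or.inl ⟨e1.trans f1, e2.trans f2⟩
      · exact Or.inr ⟨e1 ▸ f1, e2 ▸ f2⟩
    · rcases ih2 with ⟨f1, f2⟩ | ⟨f1, f2⟩
      · exact Or.inr ⟨f1 ▸ e1, by rw [← f2]; exact e2⟩
      · refine Or.inl ⟨?_, ?_⟩
        · cases hp : p.2 <;> cases hq : q.2 <;> cases hr : r.2 <;> simp_all
        · calc p.1 = p.1 + (q.1 + r.1) := by rw [f2, add_zero]
          _ = p.1 + q.1 + r.1 := by rw [add_assoc]
          _ = r.1 := by rw [e2, zero_add]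

private lemma fst_eq_zero_of_mk_eq_szero {M : Type*} [AddCommMonoid M] {r : M × Bool}
    (hr : Quot.mk (symRel M) r = szero M) : r.1 = 0 := by
  have := eqvGen_to_myR (Quot.eqvGen_exact hr)
  rcases this with ⟨_, e⟩ | ⟨_, e⟩
  · exact e
  · simpa using e

/-- negation is well defined on the quotient -/
private def sneg {M : Type*} [AddCommMonoid M] : SymHG M → SymHG M :=
  Quot.lift (fun p => Quot.mk (symRel M) (p.1, !p.2))
    (fun p q hpq => Quot.sound ⟨by simpa using fun hh => hpq.1 hh, hpq.2⟩)

theorem hadd_unique_inverse {M : Type*} [AddCommMonoid M] (h : SplitCond M) :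
    ∀ x : SymHG M, ∃! y : SymHG M, szero M ∈ hadd x y := by
  intro x
  refine ⟨sneg x, ?_, ?_⟩
  · -- existence
    induction x using Quot.ind with
    | _ p =>
      obtain ⟨a, s⟩ := p
      cases s
      · exact ⟨(a, false), (a, true), (0, true), rfl, rfl, rfl,
          Or.inl ⟨0, rfl, by simp⟩⟩
      · exact ⟨(a, true), (a, false), (0, true), rfl, rfl, rfl,
          Or.inl ⟨0, rfl, by simp⟩⟩
  · -- uniqueness: any y with szero ∈ hadd x y equals sneg x
    rintro y ⟨p, q, r, hp, hq, hr, hmem⟩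
    subst hp; subst hq
    obtain ⟨a, s⟩ := p
    obtain ⟨b, t⟩ := q
    have hr0 : r.1 = 0 := fst_eq_zero_of_mk_eq_szero hr
    cases s <;> cases t
    · -- (a,false),(b,false): r = (a+b,false), a+b=0
      simp only [hsum, Set.mem_singleton_iff] at hmem
      subst hmem
      simp only at hr0
      exact (Quot.sound ⟨by simp, by rw [add_comm]; exact hr0⟩)
    · -- (a,false),(b,true): z = r.1 = 0 forces a = b
      rcases hmem with ⟨z, hz, he⟩ | ⟨z, hz, he⟩ <;>
      · subst hz; simp only at hr0; subst hr0
        simp only [zero_add] at he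
        rw [he]; rfl
    · -- (a,true),(b,false)
      rcases hmem with ⟨z, hz, he⟩ | ⟨z, hz, he⟩ <;>
      · subst hz; simp only at hr0; subst hr0
        simp only [zero_add] at he
        rw [he]; rfl
    · -- (a,true),(b,true): a+b=0
      simp only [hsum, Set.mem_singleton_iff] at hmem
      subst hmem
      simp only at hr0
      exact (Quot.sound ⟨by simp, by rw [add_comm]; exact hr0⟩)
end

section
/- Let B be a commutative monoid such that s(B) is a canonical hypergroup under the given hyperlaw. Then B satisfies the splitting condition: for all x, y, u, v with x + y = u + v there exists z with (x + z = u and z + v = y) or (x = u + z and v = z + y). -/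
/-- `s(M)` is a canonical hypergroup: commutativity, associativity, neutral element,
unique inverses, and reversibility (phrased via the inverse: `x ∈ y + z → z ∈ x + (-y)`). -/
def IsCanonicalHypergroup (M : Type*) [AddCommMonoid M] : Prop :=
  (∀ x y : SymHG M, hadd x y = hadd y x) ∧
  (∀ x y z : SymHG M, (⋃ w ∈ hadd x y, hadd w z) = ⋃ w ∈ hadd y z, hadd x w) ∧
  (∀ x : SymHG M, hadd (szero M) x = {x}) ∧
  (∀ x : SymHG M, ∃! y : SymHG M, szero M ∈ hadd x y) ∧
  (∀ x y z w : SymHG M, x ∈ hadd y z → szero M ∈ hadd y w → z ∈ hadd x w)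

/-!
If `x + y = u + v`, then `(u, 1)` lies in `((x, 1) + (y, 1)) + (v, -1)`, hence, by
associativity, in `(x, 1) + w` for some `w ∈ (y, 1) + (v, -1)`.
Such a `w` is `(z, 1)` with `z + v = y` or `(z, -1)` with `z + y = v`, and `(u, 1) ∈ (x, 1) + w`
then says `x + z = u`, resp. `u + z = x`: this is the splitting. The quotient only glues `(a, 1)`
to `(b, -1)` when `a + b = 0`, so representatives can be read off unless one of `x, y, u, v` is
an additive unit, and in that case the splitting is immediate.
-/

section Splits

variable {M : Type*} [AddCommMonoid M]

def Splits (x y u v : M) : Prop :=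
  ∃ z : M, (x + z = u ∧ z + v = y) ∨ (x = u + z ∧ v = z + y)

theorem Splits.symm {x y u v : M} (h : Splits x y u v) : Splits u v x y := by
  obtain ⟨z, ⟨hxz, hzv⟩ | ⟨hxz, hzv⟩⟩ := h
  · exact ⟨z, Or.inr ⟨hxz.symm, hzv.symm⟩⟩
  · exact ⟨z, Or.inl ⟨hxz.symm, hzv.symm⟩⟩

theorem Splits.swap {x y u v : M} (h : Splits x y u v) : Splits y x v u := by
  obtain ⟨z, ⟨hxz, hzv⟩ | ⟨hxz, hzv⟩⟩ := h
  · exact ⟨z, Or.inr ⟨by rw [← hzv, add_comm], by rw [← hxz, add_comm]⟩⟩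
  · exact ⟨z, Or.inl ⟨by rw [hzv, add_comm], by rw [hxz, add_comm]⟩⟩

theorem splits_of_isAddUnit_left {x y u v : M} (hxy : x + y = u + v) (hx : IsAddUnit x) :
    Splits x y u v := by
  obtain ⟨w, hw⟩ := isAddUnit_iff_exists_neg.mp hx
  refine ⟨w + u, Or.inl ⟨by rw [← add_assoc, hw, zero_add], ?_⟩⟩
  calc w + u + v = w + (x + y) := by rw [add_assoc, hxy]
    _ = y := by rw [← add_assoc, add_comm w x, hw, zero_add]

theorem splits_of_isAddUnit {x y u v : M} (hxy : x + y = u + v)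
    (hunit : IsAddUnit x ∨ IsAddUnit y ∨ IsAddUnit u ∨ IsAddUnit v) : Splits x y u v := by
  rcases hunit with hx | hy | hu | hv
  · exact splits_of_isAddUnit_left hxy hx
  · exact (splits_of_isAddUnit_left (by rw [add_comm, hxy, add_comm]) hy).swap
  · exact (splits_of_isAddUnit_left hxy.symm hu).symm
  · exact (splits_of_isAddUnit_left (by rw [add_comm, ← hxy, add_comm]) hv).swap.symm

end Splits

namespace SymHG

variable {M : Type*} [AddCommMonoid M]

theorem eq_or_symRel_of_mk_eq {p q : M × Bool}
    (h : Quot.mk (symRel M) p = Quot.mk (symRel M) q) : p = q ∨ symRel M p q := by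
  rw [Quot.eq] at h
  induction h with
  | rel p q hpq => exact Or.inr hpq
  | refl p => exact Or.inl rfl
  | symm p q _ ih =>
    rcases ih with rfl | ⟨hne, hsum⟩
    · exact Or.inl rfl
    · exact Or.inr ⟨hne.symm, by rwa [add_comm]⟩
  | trans p q r _ _ ihpq ihqr =>
    rcases ihpq with rfl | ⟨hne₁, hsum₁⟩
    · exact ihqr
    rcases ihqr with rfl | ⟨hne₂, hsum₂⟩
    · exact Or.inr ⟨hne₁, hsum₁⟩
    refine Or.inl (Prod.ext ?_ ?_)
    · calc p.1 = p.1 + (q.1 + r.1) := by rw [hsum₂, add_zero]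
        _ = r.1 := by rw [← add_assoc, hsum₁, zero_add]
    · revert hne₁ hne₂
      cases p.2 <;> cases q.2 <;> cases r.2 <;> decide

theorem eq_of_mk_eq_of_not_isAddUnit {p q : M × Bool} (hq : ¬IsAddUnit q.1)
    (h : Quot.mk (symRel M) p = Quot.mk (symRel M) q) : p = q :=
  (eq_or_symRel_of_mk_eq h).resolve_right fun hpq =>
    hq (isAddUnit_iff_exists_neg.mpr ⟨p.1, by rw [add_comm, hpq.2]⟩)

theorem mk_mem_hadd_of_mem_hsum {p q r : M × Bool} (h : r ∈ hsum p q) :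
    Quot.mk (symRel M) r ∈ hadd (Quot.mk (symRel M) p) (Quot.mk (symRel M) q) :=
  ⟨p, q, r, rfl, rfl, rfl, h⟩

@[simp]
theorem pos_mem_hsum_pos_pos {a b c : M} :
    (c, true) ∈ hsum (a, true) (b, true) ↔ a + b = c := by
  simp only [hsum, Set.mem_singleton_iff, Prod.mk.injEq, and_true, eq_comm]

@[simp]
theorem pos_mem_hsum_pos_neg {a b c : M} :
    (c, true) ∈ hsum (a, true) (b, false) ↔ c + b = a := by
  simp [hsum]

theorem pos_mem_hsum_pos_of_symRel {a c : M} {q q' : M × Bool} (hqq' : symRel M q q')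
    (h : (c, true) ∈ hsum (a, true) q) : (c, true) ∈ hsum (a, true) q' := by
  obtain ⟨b, s⟩ := q
  obtain ⟨b', s'⟩ := q'
  obtain ⟨hne, hbb' : b + b' = 0⟩ := hqq'
  cases s <;> cases s' <;> simp only [ne_eq, not_true_eq_false] at hne <;>
    simp only [pos_mem_hsum_pos_pos, pos_mem_hsum_pos_neg] at h ⊢
  all_goals rw [← h, add_assoc, hbb', add_zero]

theorem pos_mem_hsum_pos_of_mk_eq {a c : M} {q q' : M × Bool}
    (hqq' : Quot.mk (symRel M) q = Quot.mk (symRel M) q')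
    (h : (c, true) ∈ hsum (a, true) q) : (c, true) ∈ hsum (a, true) q' := by
  rcases eq_or_symRel_of_mk_eq hqq' with rfl | hrel
  exacts [h, pos_mem_hsum_pos_of_symRel hrel h]

theorem splits_of_mem_hsum {x y u v : M} {r : M × Bool} (hr : r ∈ hsum (y, true) (v, false))
    (hu : (u, true) ∈ hsum (x, true) r) : Splits x y u v := by
  rcases hr with ⟨z, rfl, hz⟩ | ⟨z, rfl, hz⟩
  · exact ⟨z, Or.inl ⟨pos_mem_hsum_pos_pos.mp hu, hz⟩⟩
  · exact ⟨z, Or.inr ⟨(pos_mem_hsum_pos_neg.mp hu).symm, hz.symm⟩⟩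

theorem splits_of_hadd_assoc
    (hassoc : ∀ x y z : SymHG M, (⋃ w ∈ hadd x y, hadd w z) = ⋃ w ∈ hadd y z, hadd x w)
    {x y u v : M} (hxy : x + y = u + v) (hx : ¬IsAddUnit x) (hy : ¬IsAddUnit y)
    (hu : ¬IsAddUnit u) (hv : ¬IsAddUnit v) : Splits x y u v := by
  have hmem :=
    (hassoc (Quot.mk _ (x, true)) (Quot.mk _ (y, true)) (Quot.mk _ (v, false))).subset <|
    Set.mem_iUnion₂.mpr ⟨_, mk_mem_hadd_of_mem_hsum (pos_mem_hsum_pos_pos.mpr rfl),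
      mk_mem_hadd_of_mem_hsum (r := (u, true)) (pos_mem_hsum_pos_neg.mpr hxy.symm)⟩
  obtain ⟨_, ⟨p, q, r, hp, hq, rfl, hr⟩, ⟨p', q', r', hp', hq', hu', hr'⟩⟩ :=
    Set.mem_iUnion₂.mp hmem
  obtain rfl := eq_of_mk_eq_of_not_isAddUnit hy hp
  obtain rfl := eq_of_mk_eq_of_not_isAddUnit hv hq
  obtain rfl := eq_of_mk_eq_of_not_isAddUnit hx hp'
  obtain rfl := eq_of_mk_eq_of_not_isAddUnit hu hu'
  exact splits_of_mem_hsum hr (pos_mem_hsum_pos_of_mk_eq hq' hr')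

end SymHG

theorem hypergroup_implies_splitCond {M : Type*} [AddCommMonoid M]
    (h : IsCanonicalHypergroup M) : SplitCond M := by
  intro x y u v hxy
  by_cases hunit : IsAddUnit x ∨ IsAddUnit y ∨ IsAddUnit u ∨ IsAddUnit v
  · exact splits_of_isAddUnit hxy hunit
  · push Not at hunit
    obtain ⟨hx, hy, hu, hv⟩ := hunit
    exact SymHG.splits_of_hadd_assoc h.2.1 hxy hx hy hu hv
end

section
/- Let B be a commutative monoid satisfying the splitting condition, H a canonical hypergroup, and f : B → H an additive map (f(0) = 0 and f(a+b) ∈ f(a) + f(b) for all a, b). Then the map f̃ : s(B) → H defined by f̃(a,1) = f(a) and f̃(a,−1) = −f(a) is well-defined on the quotient and satisfies f̃(u + v) ⊆ f̃(u) + f̃(v) for all u, v ∈ s(B); moreover f̃ is the unique such extension of f. -/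
/-- A canonical hypergroup structure on a type `H`. -/
structure CanonicalHypergroup (H : Type*) where
  hsum : H → H → Set H
  zero : H
  comm : ∀ x y, hsum x y = hsum y x
  assoc : ∀ x y z, (⋃ w ∈ hsum x y, hsum w z) = ⋃ w ∈ hsum y z, hsum x w
  zero_add : ∀ x, hsum zero x = {x}
  exists_neg : ∀ x, ∃! y, zero ∈ hsum x y
  reversible : ∀ x y z w, x ∈ hsum y z → zero ∈ hsum y w → z ∈ hsum x w


namespace CHaux

variable {H : Type*} (K : CanonicalHypergroup H)

noncomputable def neg (x : H) : H := (K.exists_neg x).choose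

lemma neg_spec (x : H) : K.zero ∈ K.hsum x (neg K x) := (K.exists_neg x).choose_spec.1

lemma neg_uniq {x y : H} (h : K.zero ∈ K.hsum x y) : y = neg K x :=
  (K.exists_neg x).choose_spec.2 y h

lemma neg_neg (x : H) : neg K (neg K x) = x := by
  have h := neg_spec K x
  rw [K.comm] at h
  exact (neg_uniq K h).symm

lemma neg_mem {x y z : H} (h : x ∈ K.hsum y z) :
    neg K x ∈ K.hsum (neg K y) (neg K z) := by
  have h0 : K.zero ∈ K.hsum x (neg K x) := neg_spec K x
  have hmem : K.zero ∈ ⋃ w ∈ K.hsum y z, K.hsum w (neg K x) :=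
    Set.mem_biUnion h h0
  rw [K.assoc] at hmem
  simp only [Set.mem_iUnion] at hmem
  obtain ⟨w, hw, hzw⟩ := hmem
  have hwe : w = neg K y := neg_uniq K hzw
  subst hwe
  exact K.reversible _ _ _ _ hw (neg_spec K z)

end CHaux

open CHaux in
theorem universal_extension {M : Type*} [AddCommMonoid M] (hM : SplitCond M)
    {H : Type*} (K : CanonicalHypergroup H) (f : M → H)
    (hf0 : f 0 = K.zero) (hfadd : ∀ a b : M, f (a + b) ∈ K.hsum (f a) (f b)) :
    ∃! g : SymHG M → H,
      (∀ a : M, g (Quot.mk (symRel M) (a, true)) = f a) ∧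
      (∀ a : M, K.zero ∈ K.hsum (f a) (g (Quot.mk (symRel M) (a, false)))) ∧
      (∀ u v : SymHG M, ∀ w ∈ hadd u v, g w ∈ K.hsum (g u) (g v)) := by
  classical
  set N := neg K with hN
  -- the lift to the quotient
  have hsound : ∀ p q : M × Bool, symRel M p q →
      (fun p : M × Bool => if p.2 then f p.1 else N (f p.1)) p
        = (fun p : M × Bool => if p.2 then f p.1 else N (f p.1)) q := by
    rintro ⟨a, ba⟩ ⟨b, bb⟩ ⟨hne, hab⟩
    simp only at hne hab
    have hz : K.zero ∈ K.hsum (f a) (f b) := by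
      have := hfadd a b
      rw [hab, hf0] at this
      exact this
    cases ba <;> cases bb <;> simp_all
    · -- ba = false, bb = true : need N (f a) = f b
      exact (neg_uniq K hz).symm
    · -- ba = true, bb = false : need f a = N (f b)
      rw [K.comm] at hz
      exact neg_uniq K hz
  set gb : M × Bool → H := fun p => if p.2 then f p.1 else N (f p.1) with hgb
  refine ⟨Quot.lift gb hsound, ⟨?_, ?_, ?_⟩, ?_⟩
  · intro a; simp [gb]
  · intro a
    show K.zero ∈ K.hsum (f a) (N (f a))
    exact neg_spec K (f a)
  · rintro u v w ⟨p, q, r, rfl, rfl, rfl, hmem⟩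
    show gb r ∈ K.hsum (gb p) (gb q)
    obtain ⟨a, ba⟩ := p
    obtain ⟨b, bb⟩ := q
    cases ba <;> cases bb
    · -- false false
      simp only [hsum, Set.mem_singleton_iff] at hmem
      subst hmem
      simpa [gb] using neg_mem K (hfadd a b)
    · -- (a,false) + (b,true)
      simp only [hsum, Set.mem_setOf_eq] at hmem
      rcases hmem with ⟨z, rfl, hzab⟩ | ⟨z, rfl, hzab⟩
      · -- r = (z,true), z + a = b : need f z ∈ hsum (N (f a)) (f b)
        have h1 : f b ∈ K.hsum (f a) (f z) := by
          rw [K.comm]; rw [← hzab]; exact hfadd z a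
        have h2 := K.reversible _ _ _ _ h1 (neg_spec K (f a))
        rw [K.comm] at h2
        simpa [gb] using h2
      · -- r = (z,false), z + b = a : need N (f z) ∈ hsum (N (f a)) (f b)
        have h1 : f a ∈ K.hsum (f z) (f b) := by rw [← hzab]; exact hfadd z b
        have h2 := neg_mem K h1
        rw [K.comm] at h2
        have h3 : K.zero ∈ K.hsum (N (f b)) (f b) := by
          rw [K.comm]; exact neg_spec K (f b)
        have h4 := K.reversible _ _ _ _ h2 h3
        simpa [gb] using h4
    · -- (a,true) + (b,false)
      simp only [hsum, Set.mem_setOf_eq] at hmem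
      rcases hmem with ⟨z, rfl, hzab⟩ | ⟨z, rfl, hzab⟩
      · -- r = (z,true), z + b = a : need f z ∈ hsum (f a) (N (f b))
        have h1 : f a ∈ K.hsum (f b) (f z) := by
          rw [K.comm]; rw [← hzab]; exact hfadd z b
        have h2 := K.reversible _ _ _ _ h1 (neg_spec K (f b))
        simpa [gb] using h2
      · -- r = (z,false), z + a = b : need N (f z) ∈ hsum (f a) (N (f b))
        have h1 : f b ∈ K.hsum (f a) (f z) := by
          rw [K.comm]; rw [← hzab]; exact hfadd z a
        have h2 := K.reversible _ _ _ _ h1 (neg_spec K (f a))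
        -- h2 : f z ∈ hsum (f b) (N (f a))
        have h3 := neg_mem K h2
        rw [CHaux.neg_neg] at h3
        rw [K.comm] at h3
        simpa [gb] using h3
    · -- true true
      simp only [hsum, Set.mem_singleton_iff] at hmem
      subst hmem
      simpa [gb] using hfadd a b
  · rintro g' ⟨h1, h2, _⟩
    funext w
    induction w using Quot.ind with
    | _ p =>
      obtain ⟨a, b⟩ := p
      cases b
      · have := h2 a
        have he : g' (Quot.mk (symRel M) (a, false)) = N (f a) := neg_uniq K this
        rw [he]
        show _ = gb (a, false)
        simp [gb]
      · rw [h1 a]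
        show _ = gb (a, true)
        simp [gb]
end

section
/- A commutative monoid B satisfies the splitting condition if and only if for any element a ∈ B, any two decompositions of a as finite ordered sums admit a common refinement. Here a decomposition of a is a finite sequence (a_1,…,a_n) with a = a_1 + ⋯ + a_n, and (b_1,…,b_m) refines (a_1,…,a_n) if {1,…,m} can be partitioned into consecutive intervals J_1,…,J_n with a_i = Σ_{j∈J_i} b_j for each i. -/
/-- `l'` refines `l`: `l'` can be cut into consecutive blocks whose sums give `l`. -/
def Refines {M : Type*} [AddCommMonoid M] (l' l : List M) : Prop :=
  ∃ P : List (List M), P.flatten = l' ∧ P.map List.sum = l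

theorem List.exists_sum_split_of_append_eq_append {M : Type*} [AddCommMonoid M]
    {A B C D : List M} (h : A ++ B = C ++ D) :
    ∃ z : M, (A.sum + z = C.sum ∧ z + D.sum = B.sum) ∨
      (A.sum = C.sum + z ∧ D.sum = z + B.sum) := by
  rcases List.append_eq_append_iff.mp h with ⟨E, rfl, rfl⟩ | ⟨E, rfl, rfl⟩
  · exact ⟨E.sum, Or.inl ⟨(List.sum_append ..).symm, (List.sum_append ..).symm⟩⟩
  · exact ⟨E.sum, Or.inr ⟨List.sum_append .., List.sum_append ..⟩⟩

namespace Refines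

variable {M : Type*} [AddCommMonoid M]

theorem refl (l : List M) : Refines l l :=
  ⟨l.map ([·]), List.flatMap_singleton' l, by simp [Function.comp_def]⟩

theorem sum_singleton (l : List M) : Refines l [l.sum] :=
  ⟨[l], by simp, by simp⟩

theorem cons {l' l : List M} (x : M) (h : Refines l' l) : Refines (x :: l') (x :: l) := by
  obtain ⟨P, rfl, rfl⟩ := h
  exact ⟨[x] :: P, by simp, by simp⟩

theorem cons_add_head {l' l : List M} {z : M} (x : M) (h : Refines l' (z :: l)) :
    Refines (x :: l') ((x + z) :: l) := by
  obtain ⟨_ | ⟨Z, P⟩, rfl, hP⟩ := h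
  · simp at hP
  · obtain ⟨rfl, rfl⟩ := List.cons_eq_cons.mp hP
    exact ⟨(x :: Z) :: P, by simp, by simp⟩

theorem pair_iff {l : List M} {x y : M} :
    Refines l [x, y] ↔ ∃ A B : List M, A ++ B = l ∧ A.sum = x ∧ B.sum = y := by
  constructor
  · rintro ⟨P, rfl, hP⟩
    obtain ⟨A, P, rfl, rfl, hP₁⟩ := List.map_eq_cons_iff.mp hP
    obtain ⟨B, P, rfl, rfl, hP₂⟩ := List.map_eq_cons_iff.mp hP₁
    obtain rfl := List.map_eq_nil_iff.mp hP₂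
    exact ⟨A, B, by simp, rfl, rfl⟩
  · rintro ⟨A, B, rfl, rfl, rfl⟩
    exact ⟨[A, B], by simp, by simp⟩

end Refines

section

variable {M : Type*} [AddCommMonoid M]

theorem common_refinement_cons {l xs vs : List M} {x z u : M} (hu : x + z = u)
    (h₁ : Refines l xs) (h₂ : Refines l (z :: vs)) :
    Refines (x :: l) (x :: xs) ∧ Refines (x :: l) (u :: vs) :=
  ⟨h₁.cons x, hu ▸ h₂.cons_add_head x⟩

theorem SplitCond.exists_common_refinement (h : SplitCond M) :
    ∀ l₁ l₂ : List M, l₁ ≠ [] → l₂ ≠ [] → l₁.sum = l₂.sum →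
      ∃ l₃ : List M, Refines l₃ l₁ ∧ Refines l₃ l₂
  | [x], l₂, _, _, hs => ⟨l₂, by simpa [← hs] using Refines.sum_singleton l₂, Refines.refl l₂⟩
  | l₁, [u], _, _, hs => ⟨l₁, Refines.refl l₁, by simpa [hs] using Refines.sum_singleton l₁⟩
  | x :: y :: xs, u :: v :: vs, _, _, hs => by
    obtain ⟨z, ⟨hu, hs'⟩ | ⟨hx, hs'⟩⟩ := h x (y :: xs).sum u (v :: vs).sum (by simpa using hs)
    · obtain ⟨l, h₁, h₂⟩ := SplitCond.exists_common_refinement h (y :: xs) (z :: v :: vs)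
        (List.cons_ne_nil _ _) (List.cons_ne_nil _ _) ((List.sum_cons ..).trans hs').symm
      exact ⟨x :: l, common_refinement_cons hu h₁ h₂⟩
    · obtain ⟨l, h₁, h₂⟩ := SplitCond.exists_common_refinement h (z :: y :: xs) (v :: vs)
        (List.cons_ne_nil _ _) (List.cons_ne_nil _ _) ((List.sum_cons ..).trans hs').symm
      exact ⟨u :: l, (common_refinement_cons hx.symm h₂ h₁).symm⟩
termination_by l₁ l₂ => l₁.length + l₂.length

end

theorem splitCond_iff_common_refinement {M : Type*} [AddCommMonoid M] :
    SplitCond M ↔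
      ∀ (a : M) (l₁ l₂ : List M), l₁ ≠ [] → l₂ ≠ [] →
        l₁.sum = a → l₂.sum = a →
        ∃ l₃ : List M, Refines l₃ l₁ ∧ Refines l₃ l₂ := by
  constructor
  · intro h a l₁ l₂ h₁ h₂ hs₁ hs₂
    exact h.exists_common_refinement l₁ l₂ h₁ h₂ (hs₁.trans hs₂.symm)
  intro H x y u v hs
  obtain ⟨l, hxy, huv⟩ := H (x + y) [x, y] [u, v] (by simp) (by simp) (by simp) (by simp [hs])
  obtain ⟨A, B, rfl, rfl, rfl⟩ := Refines.pair_iff.mp hxy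
  obtain ⟨C, D, hCD, rfl, rfl⟩ := Refines.pair_iff.mp huv
  exact List.exists_sum_split_of_append_eq_append hCD.symm
end

section
/- Let B be a commutative monoid satisfying the splitting condition. Then s(B) is a group (i.e., every hypersum is a singleton) if and only if B is cancellative (x + a = y + a implies x = y). -/
section Aux

variable {M : Type*} [AddCommMonoid M]

/-- An explicit equivalence relation containing `symRel`. -/
def Erel (p q : M × Bool) : Prop :=
  p = q ∨ (p.2 ≠ q.2 ∧ p.1 + q.1 = 0)

lemma Erel.symm' {p q : M × Bool} (h : Erel p q) : Erel q p := by
  rcases h with h | ⟨h1, h2⟩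
  · exact Or.inl h.symm
  · exact Or.inr ⟨Ne.symm h1, by rwa [add_comm]⟩

lemma Erel.trans' {p q r : M × Bool} (h1 : Erel p q) (h2 : Erel q r) : Erel p r := by
  rcases h1 with h1 | ⟨hb1, ha1⟩
  · rwa [h1]
  rcases h2 with h2 | ⟨hb2, ha2⟩
  · rw [← h2]; exact Or.inr ⟨hb1, ha1⟩
  refine Or.inl (Prod.ext ?_ ?_)
  · calc p.1 = p.1 + (q.1 + r.1) := by rw [ha2, add_zero]
    _ = (p.1 + q.1) + r.1 := (add_assoc _ _ _).symm
    _ = r.1 := by rw [ha1, zero_add]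
  · cases hp : p.2 <;> cases hr : r.2 <;> simp_all

lemma quot_eq_iff_Erel (p q : M × Bool) :
    Quot.mk (symRel M) p = Quot.mk (symRel M) q ↔ Erel p q := by
  constructor
  · intro hpq
    have hgen := Quot.eqvGen_exact hpq
    clear hpq
    induction hgen with
    | rel a b hab => exact Or.inr hab
    | refl a => exact Or.inl rfl
    | symm a b _ ih => exact ih.symm'
    | trans a b c _ _ ih1 ih2 => exact ih1.trans' ih2
  · rintro (rfl | hE)
    · rfl
    · exact Quot.sound hE

lemma hsum_comm (p q : M × Bool) : hsum p q = hsum q p := by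
  obtain ⟨a, _ | _⟩ := p <;> obtain ⟨b, _ | _⟩ := q <;>
    simp only [hsum, add_comm, Set.ext_iff] <;> intro r <;> tauto

lemma hsum_nonempty (h : SplitCond M) (p q : M × Bool) : (hsum p q).Nonempty := by
  obtain ⟨a, _ | _⟩ := p <;> obtain ⟨b, _ | _⟩ := q
  · exact ⟨(a + b, false), rfl⟩
  · -- p = (a, false), q = (b, true); need z + a = b (true) or z + b = a (false)
    obtain ⟨z, hz | hz⟩ := h b a a b (add_comm b a)
    · exact ⟨(z, false), Or.inr ⟨z, rfl, hz.2⟩⟩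
    · exact ⟨(z, true), Or.inl ⟨z, rfl, hz.2.symm⟩⟩
  · -- p = (a, true), q = (b, false); need z + b = a (true) or z + a = b (false)
    obtain ⟨z, hz | hz⟩ := h a b b a (add_comm a b)
    · exact ⟨(z, false), Or.inr ⟨z, rfl, hz.2⟩⟩
    · exact ⟨(z, true), Or.inl ⟨z, rfl, hz.2.symm⟩⟩
  · exact ⟨(a + b, true), rfl⟩

/-- Any two elements of the same hypersum are `Erel`-related (needs cancellativity). -/
lemma hsum_erel (hc : ∀ x y a : M, x + a = y + a → x = y)
    {p q r r' : M × Bool} (hr : r ∈ hsum p q) (hr' : r' ∈ hsum p q) : Erel r r' := by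
  obtain ⟨a, _ | _⟩ := p <;> obtain ⟨b, _ | _⟩ := q
  · simp only [hsum, Set.mem_singleton_iff] at hr hr'; exact Or.inl (hr.trans hr'.symm)
  · -- p = (a, false), q = (b, true): (z,true) ↔ z + a = b ; (z,false) ↔ z + b = a
    rcases hr with ⟨z, rfl, hz⟩ | ⟨z, rfl, hz⟩ <;> rcases hr' with ⟨w, rfl, hw⟩ | ⟨w, rfl, hw⟩
    · exact Or.inl (congrArg (·, true) (hc z w a (hz.trans hw.symm)))
    · refine Or.inr ⟨by simp, hc _ _ b ?_⟩
      rw [add_assoc, hw, hz, zero_add]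
    · refine Or.inr ⟨by simp, hc _ _ a ?_⟩
      rw [add_assoc, hw, hz, zero_add]
    · exact Or.inl (congrArg (·, false) (hc z w b (hz.trans hw.symm)))
  · -- p = (a, true), q = (b, false): (z,true) ↔ z + b = a ; (z,false) ↔ z + a = b
    rcases hr with ⟨z, rfl, hz⟩ | ⟨z, rfl, hz⟩ <;> rcases hr' with ⟨w, rfl, hw⟩ | ⟨w, rfl, hw⟩
    · exact Or.inl (congrArg (·, true) (hc z w b (hz.trans hw.symm)))
    · refine Or.inr ⟨by simp, hc _ _ a ?_⟩
      rw [add_assoc, hw, hz, zero_add]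
    · refine Or.inr ⟨by simp, hc _ _ b ?_⟩
      rw [add_assoc, hw, hz, zero_add]
    · exact Or.inl (congrArg (·, false) (hc z w a (hz.trans hw.symm)))
  · simp only [hsum, Set.mem_singleton_iff] at hr hr'; exact Or.inl (hr.trans hr'.symm)

/-- Changing the first summand along `Erel` finds an `Erel`-related element. -/
lemma hsum_congr_left {p p' q r : M × Bool} (hpp : Erel p p') (hr : r ∈ hsum p q) :
    ∃ r' ∈ hsum p' q, Erel r r' := by
  rcases hpp with rfl | ⟨hb, ha⟩
  · exact ⟨r, hr, Or.inl rfl⟩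
  obtain ⟨a, sa⟩ := p
  obtain ⟨a', sa'⟩ := p'
  obtain ⟨b, sb⟩ := q
  simp only at hb ha
  cases sa <;> cases sa' <;> [skip; skip; skip; exact absurd rfl hb]
  · exact absurd rfl hb
  · -- p = (a, false), p' = (a', true)
    cases sb
    · -- q = (b, false): r = (a+b, false)
      simp only [hsum, Set.mem_singleton_iff] at hr
      subst hr
      refine ⟨(a + b, false), Or.inr ⟨a + b, rfl, ?_⟩, Or.inl rfl⟩
      rw [add_comm a b, add_assoc, ha, add_zero]
    · -- q = (b, true): hsum p q = {(z,t):z+a=b}∪{(z,f):z+b=a}; hsum p' q = {(a'+b,t)}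
      rcases hr with ⟨z, rfl, hz⟩ | ⟨z, rfl, hz⟩
      · refine ⟨(a' + b, true), rfl, Or.inl ?_⟩
        have : z = a' + b := by
          calc z = z + (a + a') := by rw [ha, add_zero]
          _ = (z + a) + a' := (add_assoc _ _ _).symm
          _ = a' + b := by rw [hz, add_comm]
        rw [this]
      · refine ⟨(a' + b, true), rfl, Or.inr ⟨by simp, ?_⟩⟩
        rw [← add_assoc, add_comm z a', add_assoc, hz, add_comm a' a, ha]
  · -- p = (a, true), p' = (a', false)
    cases sb
    · -- q = (b, false): hsum p q mixed; hsum p' q = {(a'+b,false)}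
      rcases hr with ⟨z, rfl, hz⟩ | ⟨z, rfl, hz⟩
      · refine ⟨(a' + b, false), rfl, Or.inr ⟨by simp, ?_⟩⟩
        rw [← add_assoc, add_comm z a', add_assoc, hz, add_comm a' a, ha]
      · refine ⟨(a' + b, false), rfl, Or.inl ?_⟩
        have : z = a' + b := by
          calc z = z + (a + a') := by rw [ha, add_zero]
          _ = (z + a) + a' := (add_assoc _ _ _).symm
          _ = a' + b := by rw [hz, add_comm]
        rw [this]
    · -- q = (b, true): r = (a+b, true)
      simp only [hsum, Set.mem_singleton_iff] at hr
      subst hr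
      refine ⟨(a + b, true), Or.inl ⟨a + b, rfl, ?_⟩, Or.inl rfl⟩
      rw [add_comm a b, add_assoc, ha, add_zero]

end Aux

theorem symHG_group_iff_cancellative {M : Type*} [AddCommMonoid M]
    (h : SplitCond M) :
    (∀ x y : SymHG M, ∃ c : SymHG M, hadd x y = {c}) ↔
      (∀ x y a : M, x + a = y + a → x = y) := by
  constructor
  · intro hs x y a hxy
    obtain ⟨c, hcs⟩ := hs (Quot.mk _ (x + a, true)) (Quot.mk _ (a, false))
    have hx : Quot.mk (symRel M) (x, true) ∈
        hadd (Quot.mk (symRel M) (x + a, true)) (Quot.mk (symRel M) (a, false)) :=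
      ⟨(x + a, true), (a, false), (x, true), rfl, rfl, rfl, Or.inl ⟨x, rfl, rfl⟩⟩
    have hy : Quot.mk (symRel M) (y, true) ∈
        hadd (Quot.mk (symRel M) (x + a, true)) (Quot.mk (symRel M) (a, false)) :=
      ⟨(x + a, true), (a, false), (y, true), rfl, rfl, rfl, Or.inl ⟨y, rfl, hxy.symm⟩⟩
    rw [hcs] at hx hy
    have hE := (quot_eq_iff_Erel (M := M) _ _).mp
      (hx.trans (Set.mem_singleton_iff.mp hy).symm)
    rcases hE with heq | ⟨hb, _⟩
    · exact congrArg Prod.fst heq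
    · simp at hb
  · intro hc x y
    obtain ⟨p, rfl⟩ := Quot.exists_rep x
    obtain ⟨q, rfl⟩ := Quot.exists_rep y
    obtain ⟨r0, hr0⟩ := hsum_nonempty h p q
    refine ⟨Quot.mk (symRel M) r0, Set.eq_singleton_iff_unique_mem.mpr ⟨⟨p, q, r0, rfl, rfl, rfl, hr0⟩, ?_⟩⟩
    rintro w ⟨p', q', r', hp', hq', rfl, hmem⟩
    have hpE : Erel p' p := (quot_eq_iff_Erel _ _).mp hp'
    have hqE : Erel q' q := (quot_eq_iff_Erel _ _).mp hq'
    obtain ⟨r1, hr1, hE1⟩ := hsum_congr_left hpE hmem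
    rw [hsum_comm] at hr1
    obtain ⟨r2, hr2, hE2⟩ := hsum_congr_left hqE hr1
    rw [hsum_comm] at hr2
    have hE3 : Erel r2 r0 := hsum_erel hc hr2 hr0
    exact (quot_eq_iff_Erel _ _).mpr ((hE1.trans' hE2).trans' hE3)
end

section
/- Let S be a commutative idempotent monoid. Then S satisfies the splitting condition if and only if the canonical order on S (x ≤ y iff ∃ z, x + z = y) is total. -/
theorem idem_splitCond_iff_total {S : Type*} [AddCommMonoid S]
    (hid : ∀ x : S, x + x = x) :
    SplitCond S ↔ ∀ x y : S, (∃ z : S, x + z = y) ∨ (∃ z : S, y + z = x) := by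
  constructor
  · intro hs x y
    obtain ⟨z, h | h⟩ := hs x y y x (add_comm x y)
    · exact Or.inl ⟨z, h.1⟩
    · exact Or.inr ⟨z, h.1.symm⟩
  · intro ht x y u v h
    have key : ∀ a b : S, (∃ z : S, a + z = b) → a + b = b := by
      rintro a b ⟨z, rfl⟩
      rw [← add_assoc, hid]
    rcases ht y x with hyx | hxy
    · have h1 : y + x = x := key _ _ hyx
      have hx : x = u + v := by rw [← h, add_comm, h1]
      rcases ht v u with hvu | huv
      · have h2 : v + u = u := key _ _ hvu
        have hxu : x = u := by rw [hx, add_comm, h2]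
        rcases ht v y with hvy | hyv
        · have h3 : v + y = y := key _ _ hvy
          exact ⟨y, Or.inl ⟨by rw [add_comm x y, h1, hxu], by rw [add_comm, h3]⟩⟩
        · have h3 : y + v = v := key _ _ hyv
          exact ⟨v, Or.inr ⟨hx, by rw [add_comm v y, h3]⟩⟩
      · have h2 : u + v = v := key _ _ huv
        have hxv : x = v := by rw [hx, h2]
        refine ⟨v, Or.inr ⟨hx, ?_⟩⟩
        rw [← hxv, add_comm x y, h1]
    · have h1 : x + y = y := key _ _ hxy
      have hy : y = u + v := by rw [← h, h1]
      rcases ht v u with hvu | huv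
      · have h2 : v + u = u := key _ _ hvu
        refine ⟨y, Or.inl ⟨by rw [h1, hy, add_comm, h2], ?_⟩⟩
        rw [hy, add_assoc, hid]
      · have h2 : u + v = v := key _ _ huv
        have hyv : y = v := by rw [hy, h2]
        rcases ht u x with hux | hxu
        · have h3 : u + x = x := key _ _ hux
          exact ⟨x, Or.inr ⟨h3.symm, by rw [h1, hyv]⟩⟩
        · have h3 : x + u = u := key _ _ hxu
          exact ⟨u, Or.inl ⟨h3, by rw [h2, hyv]⟩⟩
end

section
/- Let S be a commutative idempotent monoid whose canonical order is total. Then in s(S) the hyperlaw is described as follows (writing +s for (s,1), −s for (s,−1), and |x| for the underlying element of S): for nonzero a, b ∈ S, (+a) + (−b) equals {+a} if a > b, equals {−b} if a < b, and equals the 'interval' {(t, ε) : t ≤ a, ε ∈ {−1,1}} if a = b. -/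
/-- The neutral element of `s(M)`. -/
theorem quot_inj {S : Type*} [AddCommMonoid S] (hid : ∀ x : S, x + x = x)
    {p q : S × Bool} (h : Quot.mk (symRel S) p = Quot.mk (symRel S) q) :
    p = q ∨ (p.1 = 0 ∧ q.1 = 0) := by
  classical
  let F : S × Bool → S × Bool := fun r => if r.1 = 0 then (0, true) else r
  have hF : ∀ r s, symRel S r s → F r = F s := by
    intro r s hrs
    obtain ⟨_, h0⟩ := hrs
    have hr : r.1 = 0 := by
      calc r.1 = r.1 + 0 := (add_zero _).symm
        _ = r.1 + (r.1 + s.1) := by rw [h0]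
        _ = (r.1 + r.1) + s.1 := (add_assoc _ _ _).symm
        _ = r.1 + s.1 := by rw [hid]
        _ = 0 := h0
    have hs : s.1 = 0 := by
      have h0' : s.1 + r.1 = 0 := by rw [add_comm]; exact h0
      calc s.1 = s.1 + 0 := (add_zero _).symm
        _ = s.1 + (s.1 + r.1) := by rw [h0']
        _ = (s.1 + s.1) + r.1 := (add_assoc _ _ _).symm
        _ = s.1 + r.1 := by rw [hid]
        _ = 0 := h0'
    simp [F, hr, hs]
  have hFeq : F p = F q := congrArg (Quot.lift F hF) h
  by_cases hp : p.1 = 0 <;> by_cases hq : q.1 = 0 <;>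
    simp only [F, hp, hq, if_pos, if_neg, if_true, if_false] at hFeq
  · exact Or.inr ⟨hp, hq⟩
  · exact absurd (congrArg Prod.fst hFeq).symm hq
  · exact absurd (congrArg Prod.fst hFeq) hp
  · exact Or.inl hFeq

theorem quot_inj' {S : Type*} [AddCommMonoid S] (hid : ∀ x : S, x + x = x)
    {p q : S × Bool} (hq0 : q.1 ≠ 0) (h : Quot.mk (symRel S) p = Quot.mk (symRel S) q) :
    p = q := by
  rcases quot_inj hid h with h' | ⟨_, h2⟩
  · exact h'
  · exact absurd h2 hq0

theorem idem_hadd_mixed {S : Type*} [AddCommMonoid S]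
    (hid : ∀ x : S, x + x = x)
    (htot : ∀ x y : S, x + y = y ∨ y + x = x)
    (a b : S) (ha : a ≠ 0) (hb : b ≠ 0) :
    (b + a = a → a ≠ b →
        hadd (Quot.mk (symRel S) (a, true)) (Quot.mk (symRel S) (b, false)) =
          {Quot.mk (symRel S) (a, true)}) ∧
    (a + b = b → a ≠ b →
        hadd (Quot.mk (symRel S) (a, true)) (Quot.mk (symRel S) (b, false)) =
          {Quot.mk (symRel S) (b, false)}) ∧
    (hadd (Quot.mk (symRel S) (a, true)) (Quot.mk (symRel S) (a, false)) =
        {c : SymHG S | ∃ (t : S) (ε : Bool), t + a = a ∧ c = Quot.mk (symRel S) (t, ε)}) := by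
  refine ⟨?_, ?_, ?_⟩
  · intro hba hab
    ext c
    constructor
    · rintro ⟨p, q, r, hp, hq, hr, hmem⟩
      have hp' : p = (a, true) := quot_inj' hid ha hp
      have hq' : q = (b, false) := quot_inj' hid hb hq
      subst hp' hq'
      rcases hmem with ⟨z, rfl, hz⟩ | ⟨z, rfl, hz⟩
      · rcases htot z b with h1 | h1
        · exact absurd (hz.symm.trans h1) hab
        · have hz' : z = a := by rw [← hz, add_comm, h1]
          subst hz'
          exact hr ▸ rfl
      · exfalso
        have : b + a = b := by
          calc b + a = (z + a) + a := by rw [hz]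
            _ = z + (a + a) := add_assoc _ _ _
            _ = z + a := by rw [hid]
            _ = b := hz
        exact hab (hba.symm.trans this)
    · rintro rfl
      refine ⟨(a, true), (b, false), (a, true), rfl, rfl, rfl, Or.inl ⟨a, rfl, ?_⟩⟩
      rw [add_comm]; exact hba
  · intro hab hne
    ext c
    constructor
    · rintro ⟨p, q, r, hp, hq, hr, hmem⟩
      have hp' : p = (a, true) := quot_inj' hid ha hp
      have hq' : q = (b, false) := quot_inj' hid hb hq
      subst hp' hq'
      rcases hmem with ⟨z, rfl, hz⟩ | ⟨z, rfl, hz⟩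
      · exfalso
        rcases htot z b with h1 | h1
        · exact hne (hz.symm.trans h1)
        · have hz' : z = a := by rw [← hz, add_comm, h1]
          have h2 : a + b = a := by rw [← hz', add_comm]; exact h1
          exact hne (h2.symm.trans hab)
      · rcases htot z a with h1 | h1
        · exact absurd (hz.symm.trans h1).symm hne
        · have hz' : z = b := by rw [← hz, add_comm, h1]
          subst hz'
          exact hr ▸ rfl
    · rintro rfl
      refine ⟨(a, true), (b, false), (b, false), rfl, rfl, rfl, Or.inr ⟨b, rfl, by rw [add_comm]; exact hab⟩⟩
  · ext c
    constructor
    · rintro ⟨p, q, r, hp, hq, hr, hmem⟩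
      have hp' : p = (a, true) := quot_inj' hid ha hp
      have hq' : q = (a, false) := quot_inj' hid ha hq
      subst hp' hq'
      rcases hmem with ⟨z, rfl, hz⟩ | ⟨z, rfl, hz⟩
      · exact ⟨z, true, hz, hr.symm⟩
      · exact ⟨z, false, hz, hr.symm⟩
    · rintro ⟨t, ε, ht, rfl⟩
      refine ⟨(a, true), (a, false), (t, ε), rfl, rfl, rfl, ?_⟩
      cases ε
      · exact Or.inr ⟨t, rfl, ht⟩
      · exact Or.inl ⟨t, rfl, ht⟩
end
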